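/- If α > 1 - 1/n, then the set of α-RNEs coincides with the set of classical mean-field Nash equilibria: N_α = N_1. -/

import Mathlib

open Finset

/-- A probability vector on the finite action set `Fin n`. -/
def IsProb {n : ℕ} (μ : Fin n → ℝ) : Prop := (∀ i, 0 ≤ μ i) ∧ ∑ i, μ i = 1

/-- The herding choice `A^H(μ)`: the smallest index among the maximizers of `μ`. -/
noncomputable def herd {n : ℕ} [NeZero n] (μ : Fin n → ℝ) : Fin n := by
  classical
  exact (Finset.univ.filter (fun i => ∀ j, μ j ≤ μ i)).min' (by
    obtain ⟨b, _, hb⟩ := Finset.exists_max_image (Finset.univ : Finset (Fin n)) μ Finset.univ_nonempty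
    exact ⟨b, by
      simp only [Finset.mem_filter, Finset.mem_univ, true_and]
      exact fun j => hb j (Finset.mem_univ j)⟩)

/-- `(μ, μR)` is an `α`-Rational Nash Equilibrium for the utility `u`. -/
def IsRNE {n : ℕ} [NeZero n] (u : Fin n → (Fin n → ℝ) → ℝ) (α : ℝ)
    (μ μR : Fin n → ℝ) : Prop :=
  IsProb μ ∧ IsProb μR ∧
  (∀ i, 0 < μR i → ∀ j, u j μ ≤ u i μ) ∧
  (∀ i, μ i = α * μR i + if i = herd μ then 1 - α else 0)

/-- `μ` is a classical mean-field Nash equilibrium. -/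
lemma herd_max {n : ℕ} [NeZero n] (μ : Fin n → ℝ) : ∀ j, μ j ≤ μ (herd μ) := by
  have h := Finset.min'_mem (Finset.univ.filter (fun i => ∀ j, μ j ≤ μ i))
    (by
      obtain ⟨b, _, hb⟩ := Finset.exists_max_image (Finset.univ : Finset (Fin n)) μ Finset.univ_nonempty
      exact ⟨b, by
        simp only [Finset.mem_filter, Finset.mem_univ, true_and]
        exact fun j => hb j (Finset.mem_univ j)⟩)
  simp only [Finset.mem_filter, Finset.mem_univ, true_and] at h
  exact h

lemma herd_ge {n : ℕ} [NeZero n] (μ : Fin n → ℝ) (hμ : IsProb μ) :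
    1 / (n : ℝ) ≤ μ (herd μ) := by
  have hn : (0 : ℝ) < n := by
    exact_mod_cast Nat.pos_of_ne_zero (NeZero.ne n)
  rw [div_le_iff₀ hn]
  calc (1 : ℝ) = ∑ i, μ i := hμ.2.symm
    _ ≤ ∑ _i : Fin n, μ (herd μ) := Finset.sum_le_sum (fun i _ => herd_max μ i)
    _ = μ (herd μ) * n := by simp [mul_comm]

def IsNE1 {n : ℕ} (u : Fin n → (Fin n → ℝ) → ℝ) (μ : Fin n → ℝ) : Prop :=
  IsProb μ ∧ ∀ i, 0 < μ i → ∀ j, u j μ ≤ u i μ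

/-- if `α > 1 - 1/n`, then the set of α-RNEs coincides with the set
of classical mean-field Nash equilibria: `N_α = N_1`. -/
theorem rne_eq_ne_of_large_alpha {n : ℕ} [NeZero n] (u : Fin n → (Fin n → ℝ) → ℝ)
    (α : ℝ) (hα0 : 0 < α) (hα1 : α ≤ 1) (hα : 1 - 1 / (n : ℝ) < α)
    (μ : Fin n → ℝ) (hμ : IsProb μ) :
    (∃ μR, IsRNE u α μ μR) ↔ IsNE1 u μ := by
  have hherd : 1 - α < μ (herd μ) := lt_of_lt_of_le (by linarith) (herd_ge μ hμ)
  constructor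
  · rintro ⟨μR, hμP, hμRP, hbest, heq⟩
    refine ⟨hμ, fun i hi j => ?_⟩
    by_cases hih : i = herd μ
    · have h := heq i
      rw [if_pos hih] at h
      have : 0 < μR i := by
        subst hih
        nlinarith
      exact hbest i this j
    · have h := heq i
      rw [if_neg hih] at h
      have : 0 < μR i := by nlinarith
      exact hbest i this j
  · rintro ⟨_, hbest⟩
    refine ⟨fun i => (μ i - if i = herd μ then 1 - α else 0) / α, hμ, ⟨⟨fun i => ?_, ?_⟩, fun i hi j => ?_, fun i => ?_⟩⟩
    · dsimp only
      by_cases hih : i = herd μ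
      · rw [if_pos hih]; subst hih
        exact div_nonneg (by linarith) hα0.le
      · rw [if_neg hih]
        exact div_nonneg (by linarith [hμ.1 i]) hα0.le
    · dsimp only
      rw [← Finset.sum_div, Finset.sum_sub_distrib, hμ.2,
        Finset.sum_ite_eq' Finset.univ (herd μ) (fun _ => 1 - α)]
      simp
      simp [hα0.ne']
    · apply hbest i
      dsimp only at hi
      rw [div_pos_iff] at hi
      rcases hi with ⟨h1, _⟩ | ⟨_, h2⟩
      · by_cases hih : i = herd μ
        · rw [if_pos hih] at h1; subst hih; linarith
        · rw [if_neg hih] at h1; linarith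
      · linarith
    · dsimp only
      field_simp
      ring
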